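/- Let T be a signed tree with a mismatched vertex u and Γ a disjoint signed graph on n vertices. For any 1 ≤ k ≤ n, η(T(u) ⊙^k Γ) = η(T − u) + η(Γ + u) = η(T) − 1 + η(Γ + u), where Γ + u is the subgraph of T(u) ⊙^k Γ induced by V(Γ) ∪ {u}. -/

import Mathlib

open scoped Classical

noncomputable def sadj {V : Type*} [Fintype V] [DecidableEq V]
    (G : SimpleGraph V) (σ : V → V → ℝ) : Matrix V V ℝ :=
  fun u v => if G.Adj u v then σ u v else 0

noncomputable def nullity {V : Type*} [Fintype V] [DecidableEq V]
    (A : Matrix V V ℝ) : ℕ :=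
  Module.finrank ℝ (LinearMap.ker (Matrix.mulVecLin A))

def walkSign {V : Type*} (G : SimpleGraph V) (σ : V → V → ℝ)
    {u v : V} (w : G.Walk u v) : ℝ :=
  (w.darts.map (fun d => σ d.toProd.1 d.toProd.2)).prod

def BalancedSG {V : Type*} (G : SimpleGraph V) (σ : V → V → ℝ) : Prop :=
  ∀ (u : V) (w : G.Walk u u), w.IsCycle → walkSign G σ w = 1

def IsMatchingF {V : Type*} (G : SimpleGraph V) (M : Finset (Sym2 V)) : Prop :=
  (∀ e ∈ M, e ∈ G.edgeSet) ∧
  ∀ e ∈ M, ∀ f ∈ M, e ≠ f → ∀ v : V, ¬(v ∈ e ∧ v ∈ f)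

noncomputable def matchingNumber {V : Type*} (G : SimpleGraph V) : ℕ :=
  sSup {k | ∃ M : Finset (Sym2 V), IsMatchingF G M ∧ M.card = k}

def MatchedIn {V : Type*} (G : SimpleGraph V) (u : V) : Prop :=
  ∀ M : Finset (Sym2 V), IsMatchingF G M → M.card = matchingNumber G → ∃ e ∈ M, u ∈ e

def MismatchedIn {V : Type*} (G : SimpleGraph V) (u : V) : Prop :=
  ∃ M : Finset (Sym2 V), IsMatchingF G M ∧ M.card = matchingNumber G ∧ ∀ e ∈ M, u ∉ e

/-- The k-joining graph: disjoint union of T and Γ plus edges from u to the vertices of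
the chosen set S ⊆ V(Γ). -/
def joinGraph {V₁ V₂ : Type*} (T : SimpleGraph V₁) (Γ : SimpleGraph V₂)
    (u : V₁) (S : Finset V₂) : SimpleGraph (V₁ ⊕ V₂) :=
  SimpleGraph.fromRel (fun p q =>
    match p, q with
    | Sum.inl a, Sum.inl b => T.Adj a b
    | Sum.inr a, Sum.inr b => Γ.Adj a b
    | Sum.inl a, Sum.inr b => a = u ∧ b ∈ S
    | Sum.inr _, Sum.inl _ => False)

/-!
If `u` is mismatched in a forest `T`, then its signed adjacency matrix `A` has a kernel vector
`x` with `x u = 1`: take a leaf `l ≠ u` with neighbour `p`, some maximum matching avoiding `u`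
contains `lp`, so `u` stays mismatched once all edges at `p` are deleted; a kernel vector of the
smaller forest, cleared at `l` and `p` and then corrected at `l`, is one for `T`. Applied to `Aᵀ`
this also gives a left kernel vector `y` with `y u = 1`.

In `T(u) ⊙ᵏ Γ` the vertex `u` is the only vertex of `T` joined to `Γ`. Adding to the row of `u`
the combination of the rows of `T - u` with coefficients `y`, and likewise for columns with `x`,
clears the blocks between `T - u` and `Γ + u` and leaves the block of `Γ + u` unchanged,
because `∑ b ≠ u, y b * A b u = -A u u = 0`. So `η(T(u) ⊙ᵏ Γ) = η(T - u) + η(Γ + u)`; the same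
splitting of `T` itself, with `{u}` in place of `Γ + u`, gives `η(T) = η(T - u) + 1`.
-/

open Matrix SimpleGraph

section Nullity

variable {ι α β : Type*} [Fintype ι] [DecidableEq ι] [Fintype α] [DecidableEq α]
  [Fintype β] [DecidableEq β]

lemma nullity_add_rank (A : Matrix ι ι ℝ) : nullity A + A.rank = Fintype.card ι := by
  have h := LinearMap.finrank_range_add_finrank_ker A.mulVecLin
  rw [Module.finrank_pi] at h
  rw [nullity, Matrix.rank]
  omega

lemma nullity_zero : nullity (0 : Matrix ι ι ℝ) = Fintype.card ι := by
  simpa using nullity_add_rank (0 : Matrix ι ι ℝ)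

lemma nullity_mul_mul_of_isUnit_det {P Q : Matrix ι ι ℝ} (hP : IsUnit P.det)
    (hQ : IsUnit Q.det) (A : Matrix ι ι ℝ) : nullity (P * A * Q) = nullity A := by
  have h₁ := nullity_add_rank (P * A * Q)
  have h₂ := nullity_add_rank A
  rw [rank_mul_eq_left_of_isUnit_det _ _ hQ, rank_mul_eq_right_of_isUnit_det _ _ hP] at h₁
  omega

lemma nullity_submatrix_equiv (e : α ≃ ι) (A : Matrix ι ι ℝ) :
    nullity (A.submatrix e e) = nullity A := by
  have h₁ := nullity_add_rank (A.submatrix e e)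
  have h₂ := nullity_add_rank A
  rw [rank_submatrix, Fintype.card_congr e] at h₁
  omega

lemma nullity_fromBlocks_zero₁₂_zero₂₁ (A : Matrix α α ℝ) (D : Matrix β β ℝ) :
    nullity (fromBlocks A 0 0 D) = nullity A + nullity D := by
  have hker : ∀ x : α ⊕ β → ℝ, fromBlocks A 0 0 D *ᵥ x = 0 ↔
      A *ᵥ (x ∘ Sum.inl) = 0 ∧ D *ᵥ (x ∘ Sum.inr) = 0 := by
    intro x
    rw [← Sum.elim_comp_inl_inr x, fromBlocks_mulVec]
    simp only [zero_mulVec, add_zero, zero_add, funext_iff, Sum.forall, Sum.elim_inl,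
      Sum.elim_inr, Pi.zero_apply]
  let e : LinearMap.ker (fromBlocks A 0 0 D).mulVecLin ≃ₗ[ℝ]
      LinearMap.ker A.mulVecLin × LinearMap.ker D.mulVecLin :=
    { toFun := fun x => (⟨x.1 ∘ Sum.inl, ((hker x.1).mp x.2).1⟩,
        ⟨x.1 ∘ Sum.inr, ((hker x.1).mp x.2).2⟩)
      invFun := fun y => ⟨Sum.elim y.1.1 y.2.1, (hker _).mpr ⟨y.1.2, y.2.2⟩⟩
      map_add' := fun _ _ => rfl
      map_smul' := fun _ _ => rfl
      left_inv := fun x => Subtype.ext (Sum.elim_comp_inl_inr x.1)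
      right_inv := fun _ => rfl }
  rw [nullity, e.finrank_eq, Module.finrank_prod, nullity, nullity]

/-- `[[1, 0], [M, 1]] * A * [[1, N], [0, 1]]` is block diagonal. -/
lemma nullity_fromBlocks_of_elim (A₁₁ : Matrix α α ℝ) (A₁₂ : Matrix α β ℝ)
    (A₂₁ : Matrix β α ℝ) (A₂₂ : Matrix β β ℝ) {M : Matrix β α ℝ} {N : Matrix α β ℝ}
    (h₂₁ : M * A₁₁ + A₂₁ = 0) (h₁₂ : A₁₁ * N + A₁₂ = 0) (h₂₂ : M * A₁₂ = 0) :
    nullity (fromBlocks A₁₁ A₁₂ A₂₁ A₂₂) = nullity A₁₁ + nullity A₂₂ := by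
  have hP : IsUnit (fromBlocks 1 0 M 1 : Matrix (α ⊕ β) (α ⊕ β) ℝ).det := by simp
  have hQ : IsUnit (fromBlocks 1 N 0 1 : Matrix (α ⊕ β) (α ⊕ β) ℝ).det := by simp
  rw [← nullity_mul_mul_of_isUnit_det hP hQ, fromBlocks_multiply, fromBlocks_multiply]
  simp only [Matrix.one_mul, Matrix.mul_one, Matrix.zero_mul, Matrix.mul_zero, add_zero,
    zero_add, h₂₁, h₁₂, h₂₂]
  exact nullity_fromBlocks_zero₁₂_zero₂₁ _ _

/-- `g w` is the only index of `g` joined to `f`; `hx` and `hy` say that `x` and `y`, extended by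
`1` at `g w`, are killed by the rows, resp. the columns, of `f`. -/
theorem nullity_eq_add_of_cut (A : Matrix ι ι ℝ) {f : α → ι} {g : β → ι}
    (hfg : Function.Bijective (Sum.elim f g)) {w : β}
    (hfb : ∀ a b, b ≠ w → A (f a) (g b) = 0) (hbf : ∀ a b, b ≠ w → A (g b) (f a) = 0)
    {x y : α → ℝ} (hx : ∀ a, ∑ b, A (f a) (f b) * x b + A (f a) (g w) = 0)
    (hy : ∀ a, ∑ b, y b * A (f b) (f a) + A (g w) (f a) = 0)
    (hyw : ∑ a, y a * A (f a) (g w) = 0) :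
    nullity A = nullity (A.submatrix f f) + nullity (A.submatrix g g) := by
  let e := Equiv.ofBijective _ hfg
  have hblocks : A.submatrix e e = fromBlocks (A.submatrix f f) (A.submatrix f g)
      (A.submatrix g f) (A.submatrix g g) := by
    ext (i | i) (j | j) <;> rfl
  rw [← nullity_submatrix_equiv e A, hblocks]
  refine nullity_fromBlocks_of_elim _ _ _ _ (M := of fun b a => if b = w then y a else 0)
    (N := of fun a b => if b = w then x a else 0) ?_ ?_ ?_
  · ext b a
    by_cases hb : b = w
    · subst hb
      simpa [mul_apply] using hy a
    · simp [mul_apply, hb, hbf]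
  · ext a b
    by_cases hb : b = w
    · subst hb
      simpa [mul_apply] using hx a
    · simp [mul_apply, hb, hfb]
  · ext b b'
    by_cases hb : b = w
    · by_cases hb' : b' = w
      · subst hb hb'
        simpa [mul_apply] using hyw
      · simp [mul_apply, hb', hfb]
    · simp [mul_apply, hb]

end Nullity

section SignedAdjacency

variable {V : Type*} [Fintype V] [DecidableEq V] {G : SimpleGraph V} {σ : V → V → ℝ}

lemma sadj_apply (G : SimpleGraph V) (σ : V → V → ℝ) (a b : V) :
    sadj G σ a b = if G.Adj a b then σ a b else 0 := rfl

lemma sadj_apply_of_not_adj {a b : V} (h : ¬G.Adj a b) : sadj G σ a b = 0 := if_neg h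

lemma sadj_transpose : (sadj G σ)ᵀ = sadj G (fun a b => σ b a) := by
  ext a b
  simp only [transpose_apply, sadj_apply, G.adj_comm]

lemma sum_setOf_ne_add (f : V → ℝ) (u : V) : ∑ a : {a | a ≠ u}, f a + f u = ∑ a, f a := by
  rw [Fintype.sum_eq_add_sum_subtype_ne f u, add_comm]
  congr 1

end SignedAdjacency

section Matching

variable {V : Type*} {G H : SimpleGraph V} {M N : Finset (Sym2 V)}

lemma bddAbove_matchingCards [Fintype V] (G : SimpleGraph V) :
    BddAbove {k | ∃ M : Finset (Sym2 V), IsMatchingF G M ∧ M.card = k} :=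
  ⟨Fintype.card (Sym2 V), by rintro k ⟨M, -, rfl⟩; exact M.card_le_univ⟩

lemma IsMatchingF.card_le_matchingNumber [Fintype V] (hM : IsMatchingF G M) :
    M.card ≤ matchingNumber G :=
  le_csSup (bddAbove_matchingCards G) ⟨M, hM, rfl⟩

lemma exists_isMatchingF_card_eq_matchingNumber [Fintype V] (G : SimpleGraph V) :
    ∃ M : Finset (Sym2 V), IsMatchingF G M ∧ M.card = matchingNumber G :=
  Nat.sSup_mem (s := {k | ∃ M : Finset (Sym2 V), IsMatchingF G M ∧ M.card = k})
    ⟨0, ∅, ⟨by simp, by simp⟩, rfl⟩ (bddAbove_matchingCards G)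

lemma IsMatchingF.subset (hM : IsMatchingF G M) (hNM : N ⊆ M) : IsMatchingF G N :=
  ⟨fun e he => hM.1 e (hNM he), fun e he f hf => hM.2 e (hNM he) f (hNM hf)⟩

lemma IsMatchingF.mono (hM : IsMatchingF G M) (hGH : G ≤ H) : IsMatchingF H M :=
  ⟨fun e he => edgeSet_mono hGH (hM.1 e he), hM.2⟩

lemma IsMatchingF.insert (hM : IsMatchingF G M) {a b : V} (hab : G.Adj a b)
    (ha : ∀ e ∈ M, a ∉ e) (hb : ∀ e ∈ M, b ∉ e) : IsMatchingF G (insert s(a, b) M) := by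
  have hnew : ∀ e ∈ M, ∀ v, ¬(v ∈ s(a, b) ∧ v ∈ e) := by
    rintro e he v ⟨hv, hve⟩
    rcases Sym2.mem_iff.mp hv with rfl | rfl
    exacts [ha e he hve, hb e he hve]
  refine ⟨?_, ?_⟩
  · simp only [Finset.mem_insert, forall_eq_or_imp]
    exact ⟨hab, hM.1⟩
  · intro e he f hf hef v hv
    rcases Finset.mem_insert.mp he with rfl | he <;> rcases Finset.mem_insert.mp hf with rfl | hf
    exacts [hef rfl, hnew f hf v hv, hnew e he v hv.symm, hM.2 e he f hf hef v hv]

variable {u l p : V}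

lemma MismatchedIn.exists_mem_of_leaf [Fintype V] (hu : MismatchedIn G u) (hlp : G.Adj l p)
    (hl : ∀ q, G.Adj l q → q = p) (hlu : l ≠ u) :
    ∃ N : Finset (Sym2 V), IsMatchingF G N ∧ N.card = matchingNumber G ∧
      (∀ e ∈ N, u ∉ e) ∧ s(l, p) ∈ N := by
  obtain ⟨M, hM, hMcard, hMu⟩ := hu
  by_cases hlpM : s(l, p) ∈ M
  · exact ⟨M, hM, hMcard, hMu, hlpM⟩
  have hlM : ∀ e ∈ M, l ∉ e := by
    intro e he hle
    obtain ⟨q, rfl⟩ := Sym2.mem_iff_exists.mp hle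
    exact hlpM (hl q (hM.1 _ he) ▸ he)
  -- `p` is covered by `M`, otherwise `s(l, p)` would enlarge it; trade its edge for `s(l, p)`
  obtain ⟨e, heM, hpe⟩ : ∃ e ∈ M, p ∈ e := by
    by_contra! hpM
    have := (hM.insert hlp hlM hpM).card_le_matchingNumber
    rw [Finset.card_insert_of_notMem hlpM] at this
    omega
  have hpM : ∀ f ∈ M.erase e, p ∉ f := fun f hf hpf =>
    hM.2 f (Finset.mem_of_mem_erase hf) e heM (Finset.ne_of_mem_erase hf) p ⟨hpf, hpe⟩
  refine ⟨insert s(l, p) (M.erase e),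
    (hM.subset (M.erase_subset e)).insert hlp (fun f hf => hlM f (Finset.mem_of_mem_erase hf))
      hpM, ?_, ?_, Finset.mem_insert_self _ _⟩
  · rw [Finset.card_insert_of_notMem (fun h => hlpM (Finset.mem_of_mem_erase h)),
      Finset.card_erase_of_mem heM]
    have := Finset.card_pos.mpr ⟨e, heM⟩
    omega
  · simp only [Finset.mem_insert, forall_eq_or_imp, Sym2.mem_iff, not_or]
    exact ⟨⟨hlu.symm, fun h => hMu e heM (h ▸ hpe)⟩,
      fun f hf => hMu f (Finset.mem_of_mem_erase hf)⟩

lemma notMem_of_mem_edgeSet_deleteIncidenceSet {e : Sym2 V}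
    (he : e ∈ (G.deleteIncidenceSet p).edgeSet) : p ∉ e := by
  rw [edgeSet_deleteIncidenceSet] at he
  exact fun hp => he.2 ⟨he.1, hp⟩

lemma mismatchedIn_deleteIncidenceSet [Fintype V] (hN : IsMatchingF G N)
    (hNcard : N.card = matchingNumber G) (hNu : ∀ e ∈ N, u ∉ e) (hlpN : s(l, p) ∈ N)
    (hl : ∀ q, G.Adj l q → q = p) : MismatchedIn (G.deleteIncidenceSet p) u := by
  have hN' : IsMatchingF (G.deleteIncidenceSet p) (N.erase s(l, p)) := by
    refine ⟨fun e he => ?_, fun e he f hf => hN.2 e (Finset.mem_of_mem_erase he) f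
      (Finset.mem_of_mem_erase hf)⟩
    rw [edgeSet_deleteIncidenceSet]
    refine ⟨hN.1 e (Finset.mem_of_mem_erase he), fun hpe => ?_⟩
    exact hN.2 e (Finset.mem_of_mem_erase he) _ hlpN (Finset.ne_of_mem_erase he) p
      ⟨hpe.2, Sym2.mem_mk_right l p⟩
  have hle : ∀ K, IsMatchingF (G.deleteIncidenceSet p) K → K.card + 1 ≤ matchingNumber G := by
    intro K hK
    have hpK : ∀ e ∈ K, p ∉ e := fun e he =>
      notMem_of_mem_edgeSet_deleteIncidenceSet (hK.1 e he)
    have hlK : ∀ e ∈ K, l ∉ e := by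
      intro e he hle
      obtain ⟨q, rfl⟩ := Sym2.mem_iff_exists.mp hle
      have hq := hK.1 _ he
      rw [mem_edgeSet, deleteIncidenceSet_adj] at hq
      exact hq.2.2 (hl q hq.1)
    have := ((hK.mono (G.deleteIncidenceSet_le p)).insert (hN.1 _ hlpN) hlK
      hpK).card_le_matchingNumber
    rwa [Finset.card_insert_of_notMem fun h => hpK _ h (Sym2.mem_mk_right l p)] at this
  obtain ⟨K, hK, hKcard⟩ := exists_isMatchingF_card_eq_matchingNumber (G.deleteIncidenceSet p)
  have := hle K hK
  have := hN'.card_le_matchingNumber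
  have := Finset.card_erase_of_mem hlpN
  exact ⟨N.erase s(l, p), hN', by omega, fun e he => hNu e (Finset.mem_of_mem_erase he)⟩

end Matching

namespace SimpleGraph

variable {V : Type*} {G : SimpleGraph V}

lemma IsAcyclic.eq_snd_of_adj_of_longest (hG : G.IsAcyclic) {a b : V} {P : G.Walk a b}
    (hP : P.IsPath) (hmax : ∀ (c d : V) (Q : G.Walk c d), Q.IsPath → Q.length ≤ P.length)
    {q : V} (hq : G.Adj a q) : q = P.snd := by
  refine hG.eq_snd_of_adj_start hP hq (by_contra fun hqP => ?_)
  have := hmax _ _ _ (hP.cons (h := hq.symm) hqP)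
  simp at this

/-- Both ends of a longest path are leaves, and they are distinct. -/
lemma IsAcyclic.exists_leaf_ne [Finite V] (hG : G.IsAcyclic) {c d : V} (hcd : G.Adj c d)
    (u : V) : ∃ l p, l ≠ u ∧ G.Adj l p ∧ ∀ q, G.Adj l q → q = p := by
  have : Nonempty V := ⟨c⟩
  obtain ⟨a, b, P, hP, hmax⟩ := Walk.exists_isPath_forall_isPath_length_le_length G
  have hnil : ¬P.Nil := by
    have := hmax c d (.cons hcd .nil) (by simp [hcd.ne])
    rw [← Walk.length_eq_zero_iff]
    simp only [Walk.length_cons, Walk.length_nil, zero_add] at this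
    omega
  by_cases hau : a = u
  · have hbu : b ≠ u := hau ▸ fun h => hnil (hP.nil_iff_eq.mpr h.symm)
    refine ⟨b, P.reverse.snd, hbu, P.reverse.adj_snd (by simpa using hnil), fun q hq => ?_⟩
    exact hG.eq_snd_of_adj_of_longest hP.reverse (by simpa using hmax) hq
  · exact ⟨a, P.snd, hau, P.adj_snd hnil, fun q hq => hG.eq_snd_of_adj_of_longest hP hmax hq⟩

end SimpleGraph

section Kernel

variable {V : Type*} [Fintype V] [DecidableEq V]

lemma exists_mulVec_sadj_eq_zero_of_deleteIncidenceSet {G : SimpleGraph V}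
    {σ : V → V → ℝ} {l p : V} (hlp : G.Adj l p) (hl : ∀ q, G.Adj l q → q = p)
    (hσ : σ p l ≠ 0) {y : V → ℝ} (hy : sadj (G.deleteIncidenceSet p) σ *ᵥ y = 0) :
    ∃ x : V → ℝ, (∀ v, v ≠ l → v ≠ p → x v = y v) ∧ sadj G σ *ᵥ x = 0 := by
  set z : V → ℝ := fun v => if v = l ∨ v = p then 0 else y v
  have hcol : ∀ i, i ≠ p → sadj G σ i l = 0 := fun i hi =>
    sadj_apply_of_not_adj fun h => hi (hl i h.symm)
  -- off row `p`, deleting the edges at `p` does not matter for a vector vanishing at `l` and `p`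
  have hz : ∀ i, i ≠ p → (sadj G σ *ᵥ z) i = 0 := by
    intro i hi
    rw [← Pi.zero_apply (M := fun _ => ℝ) i, ← hy]
    refine Finset.sum_congr rfl fun j _ => ?_
    change sadj G σ i j * (if j = l ∨ j = p then 0 else y j) = sadj _ σ i j * y j
    by_cases hj : j = l ∨ j = p
    · rw [if_pos hj, mul_zero, sadj_apply_of_not_adj, zero_mul]
      rw [deleteIncidenceSet_adj]
      rcases hj with rfl | rfl
      · exact fun h => hi (hl i h.1.symm)
      · exact fun h => h.2.2 rfl
    · rw [if_neg hj, sadj_apply, sadj_apply, deleteIncidenceSet_adj]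
      rw [not_or] at hj
      simp [hi, hj.2]
  refine ⟨z + (-(sadj G σ *ᵥ z) p / σ p l) • Pi.single l 1, fun v hvl hvp => ?_, ?_⟩
  · simp [z, hvl, hvp]
  · ext i
    rw [mulVec_add, mulVec_smul, mulVec_single_one]
    by_cases hi : i = p
    · subst hi
      rw [Pi.add_apply, Pi.smul_apply, col_apply, sadj_apply, if_pos hlp.symm, smul_eq_mul,
        div_mul_cancel₀ _ hσ, add_neg_cancel, Pi.zero_apply]
    · simp [hz i hi, hcol i hi]

theorem exists_mulVec_sadj_eq_zero_of_mismatchedIn {G : SimpleGraph V} (hG : G.IsAcyclic)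
    {σ : V → V → ℝ} (hσ : ∀ a b, G.Adj a b → σ a b ≠ 0) {u : V} (hu : MismatchedIn G u) :
    ∃ x : V → ℝ, x u = 1 ∧ sadj G σ *ᵥ x = 0 := by
  by_cases hE : ∃ c d, G.Adj c d
  swap
  · push Not at hE
    have hA : sadj G σ = 0 := by
      ext a b
      exact sadj_apply_of_not_adj (hE a b)
    exact ⟨Pi.single u 1, by simp, by rw [hA, zero_mulVec]⟩
  obtain ⟨c, d, hcd⟩ := hE
  obtain ⟨l, p, hlu, hlp, hl⟩ := hG.exists_leaf_ne hcd u
  obtain ⟨N, hN, hNcard, hNu, hlpN⟩ := hu.exists_mem_of_leaf hlp hl hlu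
  have hpu : p ≠ u := fun h => hNu _ hlpN (h ▸ Sym2.mem_mk_right l p)
  have hle := G.deleteIncidenceSet_le p
  obtain ⟨y, hyu, hy⟩ := exists_mulVec_sadj_eq_zero_of_mismatchedIn (hG.anti hle)
    (fun a b h => hσ a b (hle h)) (mismatchedIn_deleteIncidenceSet hN hNcard hNu hlpN hl)
  obtain ⟨x, hxy, hx⟩ :=
    exists_mulVec_sadj_eq_zero_of_deleteIncidenceSet hlp hl (hσ p l hlp.symm) hy
  exact ⟨x, (hxy u hlu.symm hpu.symm).trans hyu, hx⟩
termination_by G.edgeSet.ncard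
decreasing_by
  refine Set.ncard_lt_ncard (edgeSet_ssubset_edgeSet.mpr (hle.lt_of_ne fun h => ?_))
    (Set.toFinite _)
  have := h ▸ hlp
  simp [deleteIncidenceSet_adj] at this

lemma exists_vecMul_sadj_eq_zero_of_mismatchedIn {G : SimpleGraph V} (hG : G.IsAcyclic)
    {σ : V → V → ℝ} (hσ : ∀ a b, G.Adj a b → σ a b ≠ 0) {u : V} (hu : MismatchedIn G u) :
    ∃ y : V → ℝ, y u = 1 ∧ y ᵥ* sadj G σ = 0 := by
  obtain ⟨y, hyu, hy⟩ := exists_mulVec_sadj_eq_zero_of_mismatchedIn hG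
    (fun a b h => hσ b a h.symm) hu
  exact ⟨y, hyu, by rwa [← sadj_transpose, mulVec_transpose] at hy⟩

theorem nullity_eq_add_of_cut_of_mismatchedIn {ι β : Type*} [Fintype ι] [DecidableEq ι] [Fintype β]
    [DecidableEq β] {G : SimpleGraph V} (hG : G.IsAcyclic) {σ : V → V → ℝ}
    (hσ : ∀ a b, G.Adj a b → σ a b ≠ 0) {u : V} (hu : MismatchedIn G u)
    (A : Matrix ι ι ℝ) {f : {a | a ≠ u} → ι} {g : β → ι}
    (hfg : Function.Bijective (Sum.elim f g)) {w : β}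
    (hff : ∀ a b, A (f a) (f b) = sadj G σ a b) (hfw : ∀ a, A (f a) (g w) = sadj G σ a u)
    (hwf : ∀ a, A (g w) (f a) = sadj G σ u a)
    (hfb : ∀ a b, b ≠ w → A (f a) (g b) = 0) (hbf : ∀ a b, b ≠ w → A (g b) (f a) = 0) :
    nullity A = nullity (A.submatrix f f) + nullity (A.submatrix g g) := by
  obtain ⟨x, hxu, hx⟩ := exists_mulVec_sadj_eq_zero_of_mismatchedIn hG hσ hu
  obtain ⟨y, hyu, hy⟩ := exists_vecMul_sadj_eq_zero_of_mismatchedIn hG hσ hu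
  refine nullity_eq_add_of_cut A hfg hfb hbf (x := fun a => x a) (y := fun a => y a)
    (fun a => ?_) (fun a => ?_) ?_
  · have := congrFun hx a
    rw [mulVec, dotProduct, ← sum_setOf_ne_add, hxu, mul_one] at this
    simpa only [hff, hfw, Pi.zero_apply] using this
  · have := congrFun hy a
    rw [vecMul, dotProduct, ← sum_setOf_ne_add, hyu, one_mul] at this
    simpa only [hff, hwf, Pi.zero_apply] using this
  · have := congrFun hy u
    rw [vecMul, dotProduct, ← sum_setOf_ne_add, sadj_apply_of_not_adj (G.irrefl), mul_zero,
      add_zero] at this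
    simpa only [hfw, Pi.zero_apply] using this

end Kernel

section Join

variable {V₁ V₂ : Type*} {T : SimpleGraph V₁} {Γ : SimpleGraph V₂} {u : V₁} {S : Finset V₂}

lemma joinGraph_adj_inl_inl {a b : V₁} :
    (joinGraph T Γ u S).Adj (Sum.inl a) (Sum.inl b) ↔ T.Adj a b := by
  simp only [joinGraph, fromRel_adj, ne_eq, Sum.inl.injEq, T.adj_comm b a, or_self,
    and_iff_right_iff_imp]
  exact Adj.ne

lemma joinGraph_adj_inl_inr {a : V₁} {b : V₂} :
    (joinGraph T Γ u S).Adj (Sum.inl a) (Sum.inr b) ↔ a = u ∧ b ∈ S := by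
  simp [joinGraph, fromRel_adj]

variable [Fintype V₁] [DecidableEq V₁] [Fintype V₂] [DecidableEq V₂] {σ : V₁ → V₁ → ℝ}

theorem nullity_sadj_eq_nullity_induce_add_one (hT : T.IsAcyclic)
    (hσ : ∀ a b, T.Adj a b → σ a b ≠ 0) (hu : MismatchedIn T u) :
    nullity (sadj T σ) = nullity (sadj (T.induce {a | a ≠ u}) (fun a b => σ a.1 b.1)) + 1 := by
  have hbij : Function.Bijective (Sum.elim (Subtype.val : {a | a ≠ u} → V₁) fun _ : Unit => u) :=
    ⟨Subtype.val_injective.sumElim (fun _ _ _ => rfl) (fun a _ h => a.2 h),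
      fun a => if h : a = u then ⟨.inr (), h.symm⟩ else ⟨.inl ⟨a, h⟩, rfl⟩⟩
  rw [nullity_eq_add_of_cut_of_mismatchedIn hT hσ hu (sadj T σ) hbij (w := ()) (fun _ _ => rfl)
    (fun _ => rfl) (fun _ => rfl) (fun _ _ h => absurd rfl h) (fun _ _ h => absurd rfl h)]
  have hu0 : (sadj T σ).submatrix (fun _ : Unit => u) (fun _ : Unit => u) = 0 := by
    ext
    exact sadj_apply_of_not_adj (T.irrefl)
  rw [hu0, nullity_zero, Fintype.card_unit]
  rfl

theorem nullity_sadj_joinGraph (hT : T.IsAcyclic) (hσ : ∀ a b, T.Adj a b → σ a b ≠ 0)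
    (hu : MismatchedIn T u) {τ : V₁ ⊕ V₂ → V₁ ⊕ V₂ → ℝ}
    (hτ : ∀ a b, τ (Sum.inl a) (Sum.inl b) = σ a b) :
    nullity (sadj (joinGraph T Γ u S) τ) =
      nullity (sadj (T.induce {a | a ≠ u}) (fun a b => σ a.1 b.1)) +
      nullity (sadj ((joinGraph T Γ u S).induce
          {p | (∃ b, p = Sum.inr b) ∨ p = Sum.inl u}) (fun p q => τ p.1 q.1)) := by
  set s : Set (V₁ ⊕ V₂) := {p | (∃ b, p = Sum.inr b) ∨ p = Sum.inl u}
  set A := sadj (joinGraph T Γ u S) τ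
  have hA : ∀ a b, A (.inl a) (.inl b) = sadj T σ a b := fun a b => by
    simp only [A, sadj_apply, joinGraph_adj_inl_inl, hτ]
  have hA₀ : ∀ (a : {a | a ≠ u}) (b : s), b ≠ ⟨.inl u, Or.inr rfl⟩ →
      A (.inl a) b = 0 ∧ A b (.inl a) = 0 := by
    rintro a ⟨_, ⟨c, rfl⟩ | rfl⟩ hb
    · have : ¬(joinGraph T Γ u S).Adj (.inl a) (.inr c) :=
        fun h => a.2 (joinGraph_adj_inl_inr.mp h).1
      exact ⟨sadj_apply_of_not_adj this, sadj_apply_of_not_adj fun h => this h.symm⟩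
    · exact absurd rfl hb
  have hbij : Function.Bijective
      (Sum.elim (fun a : {a | a ≠ u} => (.inl a.1 : V₁ ⊕ V₂)) (Subtype.val : s → V₁ ⊕ V₂)) := by
    refine ⟨(Sum.inl_injective.comp Subtype.val_injective).sumElim Subtype.val_injective ?_, ?_⟩
    · rintro a ⟨_, ⟨c, rfl⟩ | rfl⟩ h
      · exact Sum.inl_ne_inr h
      · exact a.2 (Sum.inl_injective h)
    · rintro (a | c)
      · exact if h : a = u then ⟨.inr ⟨.inl u, Or.inr rfl⟩, by simp [h]⟩ else ⟨.inl ⟨a, h⟩, rfl⟩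
      · exact ⟨.inr ⟨.inr c, Or.inl ⟨c, rfl⟩⟩, rfl⟩
  rw [nullity_eq_add_of_cut_of_mismatchedIn hT hσ hu A hbij (fun a b => hA a b) (fun a => hA a u)
    (fun a => hA u a) (fun a b hb => (hA₀ a b hb).1) (fun a b hb => (hA₀ a b hb).2)]
  congr 2
  ext a b
  exact hA a b

end Join

theorem stmt15_general {V₁ V₂ : Type*} [Fintype V₁] [DecidableEq V₁] [Fintype V₂] [DecidableEq V₂]
    (T : SimpleGraph V₁) (σ₁ : V₁ → V₁ → ℝ) (hT : T.IsTree)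
    (hpm₁ : ∀ a b, T.Adj a b → σ₁ a b = 1 ∨ σ₁ a b = -1)
    (Γ : SimpleGraph V₂)
    (u : V₁) (hu : MismatchedIn T u)
    (S : Finset V₂)
    (τ : (V₁ ⊕ V₂) → (V₁ ⊕ V₂) → ℝ)
    (hτ₁ : ∀ a b : V₁, τ (Sum.inl a) (Sum.inl b) = σ₁ a b) :
    nullity (sadj (joinGraph T Γ u S) τ) =
      nullity (sadj (T.induce {a | a ≠ u}) (fun a b => σ₁ a.1 b.1)) +
      nullity (sadj ((joinGraph T Γ u S).induce
          {p | (∃ b, p = Sum.inr b) ∨ p = Sum.inl u}) (fun p q => τ p.1 q.1)) ∧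
    (nullity (sadj (joinGraph T Γ u S) τ) : ℤ) =
      (nullity (sadj T σ₁) : ℤ) - 1 +
      (nullity (sadj ((joinGraph T Γ u S).induce
          {p | (∃ b, p = Sum.inr b) ∨ p = Sum.inl u}) (fun p q => τ p.1 q.1)) : ℤ) := by
  have hσ : ∀ a b, T.Adj a b → σ₁ a b ≠ 0 := fun a b h => by
    rcases hpm₁ a b h with h | h <;> norm_num [h]
  have hJ := nullity_sadj_joinGraph (Γ := Γ) (S := S) hT.isAcyclic hσ hu hτ₁
  refine ⟨hJ, ?_⟩
  rw [hJ, nullity_sadj_eq_nullity_induce_add_one hT.isAcyclic hσ hu]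
  push_cast
  ring

/-- if u is mismatched in the signed tree T, then for any 1 ≤ k ≤ n,
η(T(u) ⊙ᵏ Γ) = η(T − u) + η(Γ + u) = η(T) − 1 + η(Γ + u). -/
theorem stmt15 {V₁ V₂ : Type*} [Fintype V₁] [DecidableEq V₁] [Fintype V₂] [DecidableEq V₂]
    (T : SimpleGraph V₁) (σ₁ : V₁ → V₁ → ℝ) (hT : T.IsTree)
    (hsym₁ : ∀ a b, σ₁ a b = σ₁ b a)
    (hpm₁ : ∀ a b, T.Adj a b → σ₁ a b = 1 ∨ σ₁ a b = -1)
    (Γ : SimpleGraph V₂) (σ₂ : V₂ → V₂ → ℝ)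
    (hsym₂ : ∀ a b, σ₂ a b = σ₂ b a)
    (hpm₂ : ∀ a b, Γ.Adj a b → σ₂ a b = 1 ∨ σ₂ a b = -1)
    (u : V₁) (hu : MismatchedIn T u)
    (k : ℕ) (hk1 : 1 ≤ k) (hk2 : k ≤ Fintype.card V₂)
    (S : Finset V₂) (hS : S.card = k)
    (τ : (V₁ ⊕ V₂) → (V₁ ⊕ V₂) → ℝ)
    (hτsym : ∀ p q, τ p q = τ q p)
    (hτpm : ∀ p q, (joinGraph T Γ u S).Adj p q → τ p q = 1 ∨ τ p q = -1)
    (hτ₁ : ∀ a b : V₁, τ (Sum.inl a) (Sum.inl b) = σ₁ a b)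
    (hτ₂ : ∀ a b : V₂, τ (Sum.inr a) (Sum.inr b) = σ₂ a b) :
    nullity (sadj (joinGraph T Γ u S) τ) =
      nullity (sadj (T.induce {a | a ≠ u}) (fun a b => σ₁ a.1 b.1)) +
      nullity (sadj ((joinGraph T Γ u S).induce
          {p | (∃ b, p = Sum.inr b) ∨ p = Sum.inl u}) (fun p q => τ p.1 q.1)) ∧
    (nullity (sadj (joinGraph T Γ u S) τ) : ℤ) =
      (nullity (sadj T σ₁) : ℤ) - 1 +
      (nullity (sadj ((joinGraph T Γ u S).induce
          {p | (∃ b, p = Sum.inr b) ∨ p = Sum.inl u}) (fun p q => τ p.1 q.1)) : ℤ) :=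
  stmt15_general T σ₁ hT hpm₁ Γ u hu S τ hτ₁
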